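/- Let X be a building of type (W,S) and let R and R' be residues. Then proj_{R'}(R) and proj_R(R') are parallel residues. -/

import Mathlib

noncomputable section

open scoped Classical

namespace RAB

variable {B W : Type*} [Group W] {M : CoxeterMatrix B}

/-- The Coxeter system `cs` is right-angled: the order `m(s,t)` of `s*t` is `2` or `∞`
(infinite order being encoded by `orderOf _ = 0`) for all distinct simple reflections. -/
def IsRightAngled (cs : CoxeterSystem M W) : Prop :=
  ∀ i j : B, i ≠ j →
    orderOf (cs.simple i * cs.simple j) = 2 ∨ orderOf (cs.simple i * cs.simple j) = 0

/-- The graph on the simple system joining `i, j` whenever `m(s_i, s_j) ≠ 2`. -/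
def coxeterGraph (cs : CoxeterSystem M W) : SimpleGraph B where
  Adj i j := i ≠ j ∧ orderOf (cs.simple i * cs.simple j) ≠ 2
  symm := by
    constructor
    rintro i j ⟨hij, h2⟩
    refine ⟨hij.symm, fun h => h2 ?_⟩
    have hsc : SemiconjBy (cs.simple i) (cs.simple j * cs.simple i)
        (cs.simple i * cs.simple j) := by
      unfold SemiconjBy
      group
    rw [← hsc.orderOf_eq (cs.simple i)]
    exact h
  loopless := ⟨fun i h => h.1 rfl⟩

/-- `(W, S)` is irreducible: the graph on `S` joining `s, t` whenever `m(s,t) ≠ 2`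
is connected. -/
def IsIrreducible (cs : CoxeterSystem M W) : Prop := (coxeterGraph cs).Connected

/-- `J⊥ = {i ∈ S \ J : m(i,j) = 2 for all j ∈ J}`. -/
def perp (cs : CoxeterSystem M W) (J : Set B) : Set B :=
  {i : B | i ∉ J ∧ ∀ j ∈ J, orderOf (cs.simple i * cs.simple j) = 2}

/-- The Cayley graph of `W` with respect to the simple system, joining `u ≠ v`
whenever `u⁻¹ * v` is a simple reflection. -/
def cayleyGraph (cs : CoxeterSystem M W) : SimpleGraph W where
  Adj u v := u ≠ v ∧ u⁻¹ * v ∈ Set.range cs.simple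
  symm := by
    constructor
    rintro u v ⟨huv, i, hi⟩
    refine ⟨huv.symm, i, ?_⟩
    calc cs.simple i = (cs.simple i)⁻¹ := (cs.inv_simple i).symm
      _ = (u⁻¹ * v)⁻¹ := by rw [hi]
      _ = v⁻¹ * u := by group
  loopless := ⟨fun u h => h.1 rfl⟩

/-- A building of type `(W, S)`, where the Coxeter system with simple system `S`
indexed by `B` is `cs`: a nonempty set `C` of chambers together with a Weyl
distance `δ : C × C → W` satisfying the three building axioms. -/
structure Building (cs : CoxeterSystem M W) (C : Type*) where
  nonempty : Nonempty C
  δ : C → C → W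
  delta_eq_one_iff : ∀ x y : C, δ x y = 1 ↔ x = y
  delta_mem_pair : ∀ (x y z : C) (i : B), δ y z = cs.simple i →
    δ x z = δ x y ∨ δ x z = δ x y * cs.simple i
  delta_eq_of_length : ∀ (x y z : C) (i : B), δ y z = cs.simple i →
    cs.length (δ x y * cs.simple i) = cs.length (δ x y) + 1 →
    δ x z = δ x y * cs.simple i
  exists_delta : ∀ (x y : C) (i : B), ∃ z : C,
    δ y z = cs.simple i ∧ δ x z = δ x y * cs.simple i

namespace Building

variable {C : Type*} {cs : CoxeterSystem M W} (X : Building cs C)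

/-- The gallery distance between two chambers. -/
def dist (x y : C) : ℕ := cs.length (X.δ x y)

/-- The residue of type `J` containing the chamber `c`. -/
def Res (J : Set B) (c : C) : Set C :=
  {x : C | X.δ c x ∈ Subgroup.closure (cs.simple '' J)}

/-- `R` is a residue of type `J`. -/
def IsResidueOfType (J : Set B) (R : Set C) : Prop := ∃ c : C, R = X.Res J c

/-- `R` is a residue. -/
def IsResidue (R : Set C) : Prop := ∃ J : Set B, X.IsResidueOfType J R

/-- `R` is a panel, i.e. a residue of type `{i}` for some `i`. -/
def IsPanel (R : Set C) : Prop := ∃ i : B, X.IsResidueOfType {i} R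

/-- `p` is *the* projection of the chamber `c` on the set `R`: the unique chamber
of `R` at minimal gallery distance from `c`. -/
def IsProj (R : Set C) (c p : C) : Prop :=
  p ∈ R ∧ ∀ x ∈ R, x ≠ p → X.dist c p < X.dist c x

/-- The projection of the chamber `c` on `R` (defaulting to `c` in degenerate
situations where no projection exists). -/
def proj (R : Set C) (c : C) : C :=
  if h : ∃ p : C, X.IsProj R c p then h.choose else c

/-- The projection `proj_R(R') = {proj_R(x) : x ∈ R'}`. -/
def projSet (R R' : Set C) : Set C := X.proj R '' R'

/-- Two sets of chambers (typically residues) are parallel if they project onto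
one another. -/
def Parallel (R R' : Set C) : Prop :=
  X.projSet R R' = R ∧ X.projSet R' R = R'

/-- The gallery distance from a chamber to a residue. -/
def distCR (c : C) (R : Set C) : ℕ := X.dist c (X.proj R c)

/-- The gallery distance between two residues. -/
def distRR (R R' : Set C) : ℕ := sInf ((fun x => X.distCR x R') '' R)

/-- The `J`-wing of the chamber `c`: the set of chambers whose projection to the
`J`-residue of `c` is `c` itself. -/
def wing (J : Set B) (c : C) : Set C := {x : C | X.proj (X.Res J c) x = c}

/-- An apartment: a subset of the chambers in bijection with `W`, the bijection
transporting the Weyl distance to `(u, v) ↦ u⁻¹ * v`. -/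
def IsApartment (A : Set C) : Prop :=
  ∃ f : W → C, Function.Injective f ∧ Set.range f = A ∧
    ∀ u v : W, X.δ (f u) (f v) = u⁻¹ * v

/-- The group of type-preserving automorphisms of the building: all permutations
of the chambers preserving the Weyl distance. -/
def autPlus : Subgroup (Equiv.Perm C) where
  carrier := {g : Equiv.Perm C | ∀ x y : C, X.δ (g x) (g y) = X.δ x y}
  one_mem' := fun _ _ => rfl
  mul_mem' := by
    intro a b ha hb x y
    simp only [Equiv.Perm.mul_apply]
    rw [ha, hb]
  inv_mem' := by
    intro a ha x y
    have h := ha (a⁻¹ x) (a⁻¹ y)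
    simpa using h.symm

/-- The subgroup `U_i(c)` of type-preserving automorphisms fixing the `i`-wing
of `c` pointwise. -/
def U (i : B) (c : C) : Subgroup (Equiv.Perm C) :=
  X.autPlus ⊓ fixingSubgroup (Equiv.Perm C) (X.wing {i} c)

/-- The subgroup `V_i(c)` of type-preserving automorphisms fixing the complement of
the `i`-wing of `c` pointwise. -/
def V (i : B) (c : C) : Subgroup (Equiv.Perm C) :=
  X.autPlus ⊓ fixingSubgroup (Equiv.Perm C) (X.wing {i} c)ᶜ

/-- The building is thick: every panel has at least three chambers. -/
def Thick : Prop := ∀ R : Set C, X.IsPanel R →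
  ∃ x ∈ R, ∃ y ∈ R, ∃ z ∈ R, x ≠ y ∧ x ≠ z ∧ y ≠ z

/-- The building is semi-regular: for each `i`, all panels of type `i` have the
same cardinality. -/
def SemiRegular : Prop := ∀ (i : B) (R R' : Set C),
  X.IsResidueOfType {i} R → X.IsResidueOfType {i} R' → Cardinal.mk R = Cardinal.mk R'

/-- The building is locally finite: every panel is finite. -/
def LocallyFinite : Prop := ∀ R : Set C, X.IsPanel R → R.Finite

/-- The chamber graph of the building: two distinct chambers are joined whenever
their Weyl distance is a simple reflection. -/
def chamberGraph : SimpleGraph C where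
  Adj x y := x ≠ y ∧ X.δ x y ∈ Set.range cs.simple ∧ X.δ y x ∈ Set.range cs.simple
  symm := by constructor; rintro x y ⟨h1, h2, h3⟩; exact ⟨h1.symm, h3, h2⟩
  loopless := ⟨fun x h => h.1 rfl⟩

end Building

end RAB

/-!
Take chambers `p ∈ R = Res_J p` and `p' ∈ R' = Res_K p'` at minimal distance. Each is then the
projection of the other, so `w = δ(p, p')` is length-additive with `W_J` on the left and with `W_K`
on the right. Put `J₁ = {j ∈ J | w⁻¹ s_j w ∈ W_K}`. Every chamber `x` of `Res_{J₁} p` has a chamber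
`x' ∈ R'` with `δ(x, x') = w`, which forces `x = proj_R x'`. Conversely, a Kilmoyer-type length
additivity `ℓ(u w⁻¹ v) = ℓ u + ℓ w + ℓ v` (for suitable `u ∈ W_K` and all `v ∈ W_J`) shows
`δ(p, proj_R x') ∈ W_{J₁}` for every `x' ∈ R'`. So `proj_R R' = Res_{J₁} p`, and symmetrically
for `proj_{R'} R`. Parallelism follows from the metric identity `proj_R (proj_{R'} x) = x` for
`x ∈ proj_R R'`, a consequence of the gate property.

The Coxeter-group input is the exchange condition, obtained from the action of `W` on pairs
(reflection, sign) in which `s_i` conjugates and flips the sign of `s_i` itself.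
-/

namespace CoxeterSystem

variable {B W : Type*} [Group W] {M : CoxeterMatrix B} (cs : CoxeterSystem M W)

local prefix:100 "s " => cs.simple
local prefix:100 "π " => cs.wordProd
local prefix:100 "ℓ " => cs.length

theorem simple_mul_mul_simple_eq_iff (i : B) (t r : W) :
    s i * t * s i = r ↔ t = s i * r * s i := by
  constructor <;> rintro rfl <;> simp [mul_assoc]

def reflectionPerm (i : B) : Equiv.Perm (W × ℤˣ) :=
  Function.Involutive.toPerm
    (fun p => (s i * p.1 * s i, (if p.1 = s i then -1 else 1) * p.2))
    (by
      rintro ⟨t, e⟩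
      have hcond : s i * t * s i = s i ↔ t = s i := by
        rw [simple_mul_mul_simple_eq_iff, simple_mul_simple_cancel_right]
      ext
      · simp [mul_assoc]
      · by_cases h : t = s i <;> simp [h, hcond])

theorem reflectionPerm_apply (i : B) (t : W) (e : ℤˣ) :
    cs.reflectionPerm i (t, e) = (s i * t * s i, (if t = s i then -1 else 1) * e) := rfl

theorem reflectionPerm_mul_pow_apply (i j : B) (k : ℕ) (t : W) (e : ℤˣ) :
    ((cs.reflectionPerm i * cs.reflectionPerm j) ^ k) (t, e) =
      ((s i * s j) ^ k * t * (s j * s i) ^ k,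
        (∏ l ∈ Finset.range (2 * k), if t = (s j * s i) ^ l * s j then -1 else 1) * e) := by
  induction k generalizing t e with
  | zero => simp
  | succ k ih =>
    have hshift (l : ℕ) : s i * (s j * t * s j) * s i = (s j * s i) ^ l * s j ↔
        t = (s j * s i) ^ (l + 2) * s j := by
      have : (s j * s i) ^ (l + 2) * s j = s j * s i * ((s j * s i) ^ l * s j) * (s i * s j) := by
        rw [pow_succ, pow_succ']; simp [mul_assoc]
      rw [this]
      constructor <;> intro h
      · rw [← h]; simp [mul_assoc]
      · rw [h]; simp [mul_assoc]
    have hone : s j * t * s j = s i ↔ t = (s j * s i) ^ 1 * s j := by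
      rw [simple_mul_mul_simple_eq_iff, pow_one]
    rw [pow_succ, Equiv.Perm.mul_apply, Equiv.Perm.mul_apply, reflectionPerm_apply,
      reflectionPerm_apply, ih]
    ext
    · rw [pow_succ (s i * s j), pow_succ' (s j * s i)]; simp only [mul_assoc]
    · simp only [hshift, hone, mul_add, mul_one, Finset.prod_range_succ', pow_zero, one_mul,
        add_assoc, Nat.reduceAdd]
      ac_rfl

/-- The braid relations hold because the `2 * M i j` reflections `(s j * s i) ^ l * s j` collected
by the sign repeat with period `M i j`, so each sign flip occurs an even number of times. -/
theorem isLiftable_reflectionPerm : M.IsLiftable cs.reflectionPerm := by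
  intro i j
  ext ⟨t, e⟩ : 1
  have hij := cs.simple_mul_simple_pow i j
  have hji := cs.simple_mul_simple_pow' i j
  have hperiodic (l : ℕ) : (s j * s i) ^ (M i j + l) = (s j * s i) ^ l := by
    rw [pow_add, hji, one_mul]
  rw [reflectionPerm_mul_pow_apply, two_mul, Finset.prod_range_add]
  simp only [hij, hji, hperiodic, Int.units_mul_self, one_mul, mul_one, Equiv.Perm.one_apply]

def reflectionRep : W →* Equiv.Perm (W × ℤˣ) :=
  cs.lift ⟨cs.reflectionPerm, cs.isLiftable_reflectionPerm⟩

theorem reflectionRep_wordProd (ω : List B) (t : W) (e : ℤˣ) :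
    cs.reflectionRep (π ω) (t, e) =
      (π ω * t * (π ω)⁻¹, (-1) ^ (cs.rightInvSeq ω).count t * e) := by
  induction ω generalizing t e with
  | nil => simp
  | cons i ω ih =>
    rw [wordProd_cons, map_mul, Equiv.Perm.mul_apply, ih, reflectionRep,
      lift_apply_simple, reflectionPerm_apply]
    have hcond : π ω * t * (π ω)⁻¹ = s i ↔ (π ω)⁻¹ * s i * π ω = t := by
      constructor <;> intro h <;> rw [← h] <;> group
    ext
    · simp [mul_assoc]
    · by_cases h : (π ω)⁻¹ * s i * π ω = t <;> simp [rightInvSeq, h, hcond, pow_succ, mul_comm]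

theorem neg_one_pow_count_rightInvSeq_congr {ω ω' : List B} (h : π ω = π ω') (t : W) :
    (-1 : ℤˣ) ^ (cs.rightInvSeq ω).count t = (-1) ^ (cs.rightInvSeq ω').count t := by
  simpa [reflectionRep_wordProd] using congrArg (fun w => (cs.reflectionRep w (t, 1)).2) h

theorem simple_mem_rightInvSeq {ω : List B} {i : B}
    (h : ℓ (π ω * s i) < ℓ (π ω)) : s i ∈ cs.rightInvSeq ω := by
  obtain ⟨ω', hω', hω'eq⟩ := cs.exists_isReduced (π ω * s i)
  have hprod : π (ω'.concat i) = π ω := by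
    rw [wordProd_concat, ← hω'eq, simple_mul_simple_cancel_right]
  have hnotmem : s i ∉ cs.rightInvSeq ω' := by
    intro hmem
    have := (cs.isRightInversion_of_mem_rightInvSeq hω' hmem).2
    rw [← hω'eq, simple_mul_simple_cancel_right] at this
    omega
  have hcount : (cs.rightInvSeq (ω'.concat i)).count (s i) = 1 := by
    rw [rightInvSeq_concat, List.concat_eq_append, List.count_append,
      List.count_eq_zero_of_not_mem]
    · simp
    · simp only [List.mem_map, MulAut.conj_apply, not_exists, not_and]
      intro x hx hxeq
      rw [inv_simple, simple_mul_mul_simple_eq_iff, simple_mul_simple_cancel_right] at hxeq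
      exact hnotmem (hxeq ▸ hx)
  by_contra hnot
  have := cs.neg_one_pow_count_rightInvSeq_congr hprod (s i)
  rw [hcount, List.count_eq_zero_of_not_mem hnot] at this
  exact absurd this (by decide)

theorem exists_wordProd_mul_simple_eq_eraseIdx {ω : List B} {i : B}
    (h : ℓ (π ω * s i) < ℓ (π ω)) : ∃ r < ω.length, π ω * s i = π (ω.eraseIdx r) := by
  obtain ⟨r, hr, hget⟩ := List.mem_iff_getElem.mp (cs.simple_mem_rightInvSeq h)
  refine ⟨r, by simpa using hr, ?_⟩
  rw [← wordProd_mul_getD_rightInvSeq, List.getD_eq_getElem _ _ hr, hget]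

theorem length_wordProd_eraseIdx_lt {ω : List B} {r : ℕ} (hr : r < ω.length) :
    ℓ (π (ω.eraseIdx r)) < ω.length := by
  have := cs.length_wordProd_le (ω.eraseIdx r)
  rw [List.length_eraseIdx_of_lt hr] at this
  omega

/-- The standard parabolic subgroup `W_J`. -/
def parabolic (J : Set B) : Subgroup W := Subgroup.closure (cs.simple '' J)

variable {cs}

theorem simple_mem_parabolic {J : Set B} {i : B} (hi : i ∈ J) : s i ∈ cs.parabolic J :=
  Subgroup.subset_closure ⟨i, hi, rfl⟩

theorem parabolic_mono {J K : Set B} (h : J ⊆ K) : cs.parabolic J ≤ cs.parabolic K :=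
  Subgroup.closure_mono (Set.image_mono h)

theorem parabolic_univ : cs.parabolic Set.univ = ⊤ := by
  rw [parabolic, Set.image_univ, subgroup_closure_range_simple]

theorem wordProd_mem_parabolic {J : Set B} {ω : List B} (h : ∀ i ∈ ω, i ∈ J) :
    π ω ∈ cs.parabolic J := by
  induction ω with
  | nil => exact one_mem _
  | cons i ω ih =>
    rw [wordProd_cons]
    exact mul_mem (simple_mem_parabolic (h i List.mem_cons_self))
      (ih fun j hj => h j (List.mem_cons_of_mem _ hj))

theorem exists_word_of_mem_parabolic {J : Set B} {w : W} (hw : w ∈ cs.parabolic J) :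
    ∃ ω : List B, (∀ i ∈ ω, i ∈ J) ∧ π ω = w := by
  induction hw using Subgroup.closure_induction with
  | mem x hx =>
    obtain ⟨i, hi, rfl⟩ := hx
    exact ⟨[i], by simpa using hi, cs.wordProd_singleton i⟩
  | one => exact ⟨[], by simp, rfl⟩
  | mul x y _ _ ihx ihy =>
    obtain ⟨ω₁, h₁, rfl⟩ := ihx
    obtain ⟨ω₂, h₂, rfl⟩ := ihy
    exact ⟨ω₁ ++ ω₂, fun i hi => (List.mem_append.mp hi).elim (h₁ i) (h₂ i),
      cs.wordProd_append ω₁ ω₂⟩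
  | inv x _ ihx =>
    obtain ⟨ω, h, rfl⟩ := ihx
    exact ⟨ω.reverse, fun i hi => h i (List.mem_reverse.mp hi), cs.wordProd_reverse ω⟩

theorem exists_reduced_word_of_mem_parabolic {J : Set B} {w : W} (hw : w ∈ cs.parabolic J) :
    ∃ ω : List B, (∀ i ∈ ω, i ∈ J) ∧ cs.IsReduced ω ∧ π ω = w := by
  obtain ⟨ω, hωJ, rfl⟩ := exists_word_of_mem_parabolic hw
  clear hw
  induction ω using List.reverseRecOn with
  | nil => exact ⟨[], by simp, by simp [IsReduced], rfl⟩
  | append_singleton ω i ih =>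
    obtain ⟨ν, hνJ, hν, hνω⟩ := ih fun j hj => hωJ j (by simp [hj])
    have hi : i ∈ J := hωJ i (by simp)
    rw [wordProd_append, wordProd_singleton, ← hνω]
    rcases cs.length_mul_simple (π ν) i with hup | hdown
    · refine ⟨ν ++ [i], ?_, ?_, by rw [wordProd_append, wordProd_singleton]⟩
      · simpa [or_imp, forall_and] using ⟨hνJ, hi⟩
      · rw [IsReduced, wordProd_append, wordProd_singleton, hup, List.length_append, hν.eq]
        rfl
    · obtain ⟨r, hr, heq⟩ := cs.exists_wordProd_mul_simple_eq_eraseIdx (ω := ν) (i := i) (by omega)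
      refine ⟨ν.eraseIdx r, fun j hj => hνJ j ((List.eraseIdx_sublist ν r).subset hj), ?_,
        heq.symm⟩
      have := cs.length_wordProd_eraseIdx_lt hr
      rw [IsReduced, List.length_eraseIdx_of_lt hr, ← heq, ← hν.eq]
      omega

theorem exists_isRightDescent_of_mem_parabolic {J : Set B} {w : W}
    (hw : w ∈ cs.parabolic J) (hne : w ≠ 1) : ∃ i ∈ J, cs.IsRightDescent w i := by
  obtain ⟨ω, hωJ, hω, rfl⟩ := exists_reduced_word_of_mem_parabolic hw
  obtain ⟨ω, i, rfl⟩ := (List.eq_nil_or_concat' ω).resolve_left (by rintro rfl; exact hne rfl)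
  refine ⟨i, hωJ i (by simp), ?_⟩
  have hprefix := hω.take ω.length
  rw [List.take_left] at hprefix
  have hlen := hω.eq
  rw [wordProd_append, wordProd_singleton, List.length_append, List.length_singleton] at hlen
  rw [IsRightDescent, wordProd_append, wordProd_singleton, simple_mul_simple_cancel_right,
    hprefix.eq, hlen]
  omega

theorem exists_eq_simple_of_length_eq_one {J : Set B} {w : W} (hw : w ∈ cs.parabolic J)
    (h : ℓ w = 1) : ∃ j ∈ J, w = s j := by
  obtain ⟨ω, hωJ, hω, rfl⟩ := exists_reduced_word_of_mem_parabolic hw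
  obtain ⟨j, rfl⟩ := List.length_eq_one_iff.mp (hω.symm.trans h)
  exact ⟨j, hωJ j (by simp), cs.wordProd_singleton j⟩

theorem exchange_mul {K : Set B} {a b : W} {i : B} (ha : a ∈ cs.parabolic K)
    (hab : ℓ (a * b) = ℓ a + ℓ b) (h : ℓ (a * b * s i) < ℓ (a * b)) :
    ℓ (b * s i) < ℓ b ∨ ∃ a' ∈ cs.parabolic K, ℓ a' < ℓ a ∧ a * b * s i = a' * b := by
  obtain ⟨μ, hμK, hμ, rfl⟩ := exists_reduced_word_of_mem_parabolic ha
  obtain ⟨κ, hκ, rfl⟩ := cs.exists_isReduced b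
  rw [← wordProd_append] at h hab
  obtain ⟨r, hr, heq⟩ := cs.exists_wordProd_mul_simple_eq_eraseIdx h
  rw [wordProd_append] at heq
  by_cases hrμ : r < μ.length
  · rw [List.eraseIdx_append_of_lt_length hrμ, wordProd_append] at heq
    refine .inr ⟨π (μ.eraseIdx r), wordProd_mem_parabolic fun j hj =>
      hμK j ((List.eraseIdx_sublist μ r).subset hj), ?_, heq⟩
    rw [hμ.eq]
    exact cs.length_wordProd_eraseIdx_lt hrμ
  · rw [List.eraseIdx_append_of_length_le (not_lt.mp hrμ), wordProd_append, mul_assoc] at heq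
    have hrκ : r - μ.length < κ.length := by simp at hr; omega
    refine .inl ?_
    rw [mul_left_cancel heq, hκ.eq]
    exact cs.length_wordProd_eraseIdx_lt hrκ

theorem exists_forall_length_mul_le (z : W) (H : Subgroup W) :
    ∃ v ∈ H, ∀ v' ∈ H, ℓ (z * v) ≤ ℓ (z * v') :=
  ⟨_, Function.argminOn_mem _ (H : Set W) ⟨1, H.one_mem⟩,
    fun _ hv' => Function.argminOn_le (fun v => ℓ (z * v)) (H : Set W) hv'⟩

theorem length_mul_eq_add_of_forall_le {J : Set B} {u : W}
    (hmin : ∀ v ∈ cs.parabolic J, ℓ u ≤ ℓ (u * v)) :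
    ∀ v ∈ cs.parabolic J, ℓ (u * v) = ℓ u + ℓ v := by
  intro v hv
  induction hn : ℓ v using Nat.strong_induction_on generalizing v with
  | _ n ih =>
  by_cases hv1 : v = 1
  · subst hv1; simp [← hn]
  obtain ⟨i, hi, hdesc⟩ := exists_isRightDescent_of_mem_parabolic hv hv1
  have hv' : v * s i ∈ cs.parabolic J := mul_mem hv (simple_mem_parabolic hi)
  have hlen : ℓ (v * s i) + 1 = ℓ v := cs.isRightDescent_iff.mp hdesc
  have ih' := ih _ (by omega) (v * s i) hv' rfl
  rcases cs.length_mul_simple (u * (v * s i)) i with hup | hdown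
  · rw [mul_assoc, simple_mul_simple_cancel_right] at hup
    omega
  exfalso
  rcases exchange_mul (K := Set.univ) (i := i) (by simp [parabolic_univ]) ih' (by omega) with
    hlt | ⟨a', -, hlt, heq⟩
  · rw [simple_mul_simple_cancel_right] at hlt
    omega
  · have hcoset : a' = u * (v * s i * s i * (v * s i)⁻¹) := by
      rw [← mul_assoc, ← mul_assoc, heq]; group
    have := hmin _ (mul_mem (mul_mem hv' (simple_mem_parabolic hi)) (inv_mem hv'))
    rw [← hcoset] at this
    omega

/-- The element `z * v₀` of minimal length in `z W_J` is length-additive with `W_J`, so a right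
descent of `v₀⁻¹` in `J` would be a right descent of `z`; hence `v₀ = 1`. -/
theorem length_mul_eq_add_of_forall_lt {J : Set B} {z : W} (h : ∀ i ∈ J, ℓ z < ℓ (z * s i)) :
    ∀ v ∈ cs.parabolic J, ℓ (z * v) = ℓ z + ℓ v := by
  obtain ⟨v₀, hv₀, hmin⟩ := cs.exists_forall_length_mul_le z (cs.parabolic J)
  have hadd := length_mul_eq_add_of_forall_le (u := z * v₀) fun v hv => by
    rw [mul_assoc]; exact hmin _ (mul_mem hv₀ hv)
  obtain rfl : v₀ = 1 := by
    by_contra hne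
    obtain ⟨i, hi, hdesc⟩ :=
      exists_isRightDescent_of_mem_parabolic (inv_mem hv₀) (inv_ne_one.mpr hne)
    have h₁ := hadd _ (inv_mem hv₀)
    have h₂ := hadd _ (mul_mem (inv_mem hv₀) (simple_mem_parabolic hi))
    rw [mul_inv_cancel_right] at h₁
    rw [← mul_assoc, mul_inv_cancel_right] at h₂
    have := h i hi
    unfold IsRightDescent at hdesc
    omega
  simpa using hadd


variable (cs) in
/-- Length additivity on both sides; this characterises the minimal element of `W_J w W_K`. -/
def IsDoubleCosetReduced (J K : Set B) (w : W) : Prop :=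
  (∀ v ∈ cs.parabolic J, ℓ (v * w) = ℓ v + ℓ w) ∧ ∀ u ∈ cs.parabolic K, ℓ (w * u) = ℓ w + ℓ u

variable (cs) in
/-- For `(J, K)`-reduced `w`, Kilmoyer's theorem identifies `W_{interType J K w}` with
`W_J ∩ w W_K w⁻¹`. -/
def interType (J K : Set B) (w : W) : Set B := {j ∈ J | w⁻¹ * s j * w ∈ cs.parabolic K}

theorem interType_subset (J K : Set B) (w : W) : cs.interType J K w ⊆ J := fun _ hj => hj.1

namespace IsDoubleCosetReduced

variable {J K : Set B} {w : W}

theorem inv (hw : cs.IsDoubleCosetReduced J K w) : cs.IsDoubleCosetReduced K J w⁻¹ := by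
  constructor
  · intro u hu
    rw [← length_inv, mul_inv_rev, inv_inv, hw.2 _ (inv_mem hu), length_inv, length_inv, add_comm]
  · intro v hv
    rw [← length_inv, mul_inv_rev, inv_inv, hw.1 _ (inv_mem hv), length_inv, length_inv, add_comm]

theorem inv_mul_mul_mem_parabolic (hw : cs.IsDoubleCosetReduced J K w) {a : W}
    (ha : a ∈ cs.parabolic (cs.interType J K w)) :
    w⁻¹ * a * w ∈ cs.parabolic (cs.interType K J w⁻¹) := by
  suffices cs.parabolic (cs.interType J K w) ≤
      (cs.parabolic (cs.interType K J w⁻¹)).comap (MulAut.conj w⁻¹).toMonoidHom by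
    simpa using this ha
  rw [parabolic, Subgroup.closure_le]
  rintro _ ⟨j, ⟨hj, hjK⟩, rfl⟩
  have hlen : ℓ (w⁻¹ * s j * w) = 1 := by
    have h₁ := hw.1 _ (simple_mem_parabolic hj)
    have h₂ := hw.2 _ hjK
    rw [← mul_assoc, ← mul_assoc, mul_inv_cancel, one_mul, h₁, length_simple] at h₂
    omega
  obtain ⟨k, hk, hkeq⟩ := exists_eq_simple_of_length_eq_one hjK hlen
  have hback : w⁻¹⁻¹ * s k * w⁻¹ = s j := by rw [← hkeq]; group
  have hk' : k ∈ cs.interType K J w⁻¹ := ⟨hk, hback ▸ simple_mem_parabolic hj⟩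
  simpa [hkeq] using simple_mem_parabolic hk'

/-- By the exchange condition, a right descent `k ∈ K` of `u * w` deletes a letter of `u`; the
deleted reflection is then a simple reflection of `W_{interType J K w}` shortening `u`. -/
theorem length_mul_mul (hw : cs.IsDoubleCosetReduced J K w) {u : W} (hu : u ∈ cs.parabolic J)
    (hmin : ∀ b ∈ cs.parabolic (cs.interType J K w), ℓ u ≤ ℓ (u * b)) :
    ∀ v ∈ cs.parabolic K, ℓ (u * w * v) = ℓ u + ℓ w + ℓ v := by
  have huw := hw.1 u hu
  rw [← huw]
  refine length_mul_eq_add_of_forall_lt fun k hk => ?_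
  have hwk := hw.2 _ (simple_mem_parabolic hk)
  rw [length_simple] at hwk
  rcases cs.length_mul_simple (u * w) k with hup | hdown
  · omega
  exfalso
  rcases exchange_mul (i := k) hu huw (by omega) with hlt | ⟨a', ha', hlt, heq⟩
  · omega
  have ht : u⁻¹ * a' = w * s k * w⁻¹ := by
    rw [eq_mul_inv_iff_mul_eq, mul_assoc, ← heq]; group
  have htJ : u⁻¹ * a' ∈ cs.parabolic J := mul_mem (inv_mem hu) ha'
  have hlen : ℓ (u⁻¹ * a') = 1 := by
    have := hw.1 _ htJ
    rw [ht, inv_mul_cancel_right, hwk] at this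
    rw [ht]
    omega
  obtain ⟨j, hj, hjeq⟩ := exists_eq_simple_of_length_eq_one htJ hlen
  have hjK : w⁻¹ * s j * w ∈ cs.parabolic K := by
    rw [← hjeq, ht]; simpa [mul_assoc] using simple_mem_parabolic hk
  have := hmin _ (simple_mem_parabolic ⟨hj, hjK⟩)
  rw [← hjeq, mul_inv_cancel_left] at this
  omega

end IsDoubleCosetReduced

end CoxeterSystem

namespace RAB.Building

open CoxeterSystem

variable {B W C : Type*} [Group W] {M : CoxeterMatrix B} {cs : CoxeterSystem M W}
  (X : Building cs C)

local prefix:100 "s " => cs.simple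
local prefix:100 "ℓ " => cs.length

theorem delta_self (x : C) : X.δ x x = 1 := (X.delta_eq_one_iff x x).mpr rfl

theorem delta_symm_of_eq_simple {x y : C} {i : B} (h : X.δ x y = s i) : X.δ y x = s i := by
  rcases X.delta_mem_pair y x y i h with h₁ | h₁ <;> rw [delta_self] at h₁
  · obtain rfl := (X.delta_eq_one_iff y x).mp h₁.symm
    have := cs.length_simple i
    rw [← h, delta_self, length_one] at this
    omega
  · rw [mul_eq_one_iff_eq_inv.mp h₁.symm, inv_simple]

theorem delta_eq_mul_of_length {x y z : C}
    (h : ℓ (X.δ x y * X.δ y z) = ℓ (X.δ x y) + ℓ (X.δ y z)) :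
    X.δ x z = X.δ x y * X.δ y z := by
  induction hn : ℓ (X.δ y z) using Nat.strong_induction_on generalizing z with
  | _ n ih =>
  by_cases h1 : X.δ y z = 1
  · obtain rfl := (X.delta_eq_one_iff y z).mp h1
    rw [delta_self, mul_one]
  obtain ⟨i, hdesc⟩ := cs.exists_rightDescent_of_ne_one h1
  have hlen := cs.isRightDescent_iff.mp hdesc
  obtain ⟨z₁, hzz₁, hyz₁⟩ := X.exists_delta y z i
  have hback : X.δ x y * X.δ y z = X.δ x y * X.δ y z₁ * s i := by
    rw [hyz₁, mul_assoc, mul_assoc, simple_mul_simple_self, mul_one]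
  have hge := cs.length_mul_le (X.δ x y * X.δ y z₁) (s i)
  have hle := cs.length_mul_le (X.δ x y) (X.δ y z₁)
  rw [← hback, length_simple] at hge
  have hadd₁ : ℓ (X.δ x y * X.δ y z₁) = ℓ (X.δ x y) + ℓ (X.δ y z₁) := by
    rw [hyz₁] at hle hge ⊢
    omega
  have hxz₁ := ih _ (by rw [hyz₁]; omega) hadd₁ rfl
  have hstep : ℓ (X.δ x z₁ * s i) = ℓ (X.δ x z₁) + 1 := by
    rw [hxz₁, ← hback, hadd₁, h, hyz₁]
    omega
  rw [X.delta_eq_of_length x z₁ z i (X.delta_symm_of_eq_simple hzz₁) hstep, hxz₁, ← hback]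

theorem delta_inv (x y : C) : X.δ y x = (X.δ x y)⁻¹ := by
  induction hn : ℓ (X.δ x y) using Nat.strong_induction_on generalizing y with
  | _ n ih =>
  by_cases h1 : X.δ x y = 1
  · obtain rfl := (X.delta_eq_one_iff x y).mp h1
    rw [delta_self, inv_one]
  obtain ⟨i, hdesc⟩ := cs.exists_rightDescent_of_ne_one h1
  have hlen := cs.isRightDescent_iff.mp hdesc
  obtain ⟨z, hyz, hxz⟩ := X.exists_delta x y i
  have hzx := ih _ (by rw [← hn, hxz]; omega) z rfl
  rw [hxz, mul_inv_rev, inv_simple] at hzx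
  have hinv : s i * (X.δ x y)⁻¹ = (X.δ x y * s i)⁻¹ := by rw [mul_inv_rev, inv_simple]
  rw [X.delta_eq_mul_of_length (y := z), hyz, hzx, simple_mul_simple_cancel_left]
  rw [hyz, hzx, simple_mul_simple_cancel_left, length_simple, hinv, length_inv, length_inv]
  omega

theorem dist_comm (x y : C) : X.dist x y = X.dist y x := by
  rw [dist, dist, X.delta_inv x y, length_inv]

theorem dist_triangle (x y z : C) : X.dist x z ≤ X.dist x y + X.dist y z := by
  simp only [dist]
  induction hn : ℓ (X.δ y z) using Nat.strong_induction_on generalizing z with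
  | _ n ih =>
  by_cases h1 : X.δ y z = 1
  · obtain rfl := (X.delta_eq_one_iff y z).mp h1
    omega
  obtain ⟨i, hdesc⟩ := cs.exists_rightDescent_of_ne_one h1
  have hlen := cs.isRightDescent_iff.mp hdesc
  obtain ⟨z₁, hzz₁, hyz₁⟩ := X.exists_delta y z i
  have hz₁ := ih (ℓ (X.δ y z₁)) (by rw [hyz₁]; omega) z₁ rfl
  have hstep : ℓ (X.δ x z) ≤ ℓ (X.δ x z₁) + 1 := by
    rcases X.delta_mem_pair x z₁ z i (X.delta_symm_of_eq_simple hzz₁) with h | h <;> rw [h]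
    · omega
    · simpa [length_simple] using cs.length_mul_le (X.δ x z₁) (s i)
  rw [hyz₁] at hz₁
  omega

theorem mem_Res_iff {J : Set B} {c x : C} : x ∈ X.Res J c ↔ X.δ c x ∈ cs.parabolic J := Iff.rfl

theorem self_mem_Res (J : Set B) (c : C) : c ∈ X.Res J c := by
  rw [X.mem_Res_iff, delta_self]
  exact one_mem _

theorem exists_mem_Res_delta_eq_mul (x b : C) {J : Set B} {v : W}
    (hv : v ∈ cs.parabolic J) : ∃ y ∈ X.Res J b, X.δ x y = X.δ x b * v := by
  obtain ⟨ω, hωJ, rfl⟩ := exists_word_of_mem_parabolic hv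
  clear hv
  induction ω using List.reverseRecOn with
  | nil => exact ⟨b, X.self_mem_Res J b, by simp⟩
  | append_singleton ω i ih =>
    obtain ⟨y, hy, hxy⟩ := ih fun j hj => hωJ j (by simp [hj])
    obtain ⟨z, hyz, hxz⟩ := X.exists_delta x y i
    refine ⟨z, ?_, by rw [hxz, hxy, wordProd_append, wordProd_singleton, mul_assoc]⟩
    have hi : s i ∈ cs.parabolic J := simple_mem_parabolic (hωJ i (by simp))
    rcases X.delta_mem_pair b y z i hyz with h | h <;> rw [X.mem_Res_iff, h]
    exacts [hy, mul_mem hy hi]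

theorem mem_Res_trans {J : Set B} {c y z : C} (hy : y ∈ X.Res J c) (hz : z ∈ X.Res J y) :
    z ∈ X.Res J c := by
  obtain ⟨ω, hωJ, hω⟩ := exists_word_of_mem_parabolic hz
  clear hz
  induction ω using List.reverseRecOn generalizing z with
  | nil => rwa [← (X.delta_eq_one_iff y z).mp hω.symm]
  | append_singleton ω i ih =>
    obtain ⟨z₁, hzz₁, hyz₁⟩ := X.exists_delta y z i
    rw [← hω, wordProd_append, wordProd_singleton, simple_mul_simple_cancel_right] at hyz₁
    have hz₁ := ih (fun j hj => hωJ j (by simp [hj])) hyz₁.symm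
    have hi : s i ∈ cs.parabolic J := simple_mem_parabolic (hωJ i (by simp))
    rcases X.delta_mem_pair c z₁ z i (X.delta_symm_of_eq_simple hzz₁) with h | h <;>
      rw [X.mem_Res_iff, h]
    exacts [hz₁, mul_mem hz₁ hi]

theorem Res_eq_of_mem {J : Set B} {c y : C} (hy : y ∈ X.Res J c) : X.Res J y = X.Res J c := by
  have hc : c ∈ X.Res J y := by
    rw [X.mem_Res_iff, X.delta_inv]
    exact inv_mem hy
  ext z
  exact ⟨X.mem_Res_trans hy, X.mem_Res_trans hc⟩

theorem exists_gate (J : Set B) (c x : C) :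
    ∃ q ∈ X.Res J c, ∀ v ∈ cs.parabolic J, ℓ (X.δ x q * v) = ℓ (X.δ x q) + ℓ v := by
  have hne : (X.Res J c).Nonempty := ⟨c, X.self_mem_Res J c⟩
  refine ⟨_, Function.argminOn_mem (X.dist x) _ hne, length_mul_eq_add_of_forall_le ?_⟩
  intro v hv
  obtain ⟨y, hy, hxy⟩ :=
    X.exists_mem_Res_delta_eq_mul x (Function.argminOn (X.dist x) _ hne) hv
  rw [← hxy]
  exact Function.argminOn_le (X.dist x) _
    (X.Res_eq_of_mem (Function.argminOn_mem (X.dist x) _ hne) ▸ hy)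

theorem isProj_of_length_mul {J : Set B} {c x q : C} (hq : q ∈ X.Res J c)
    (hadd : ∀ v ∈ cs.parabolic J, ℓ (X.δ x q * v) = ℓ (X.δ x q) + ℓ v) :
    X.IsProj (X.Res J c) x q := by
  refine ⟨hq, fun y hy hne => ?_⟩
  rw [← X.Res_eq_of_mem hq] at hy
  have hpos : ℓ (X.δ q y) ≠ 0 := fun h =>
    hne ((X.delta_eq_one_iff q y).mp (cs.length_eq_zero_iff.mp h)).symm
  have := hadd _ hy
  rw [dist, dist, X.delta_eq_mul_of_length this, this]
  omega

theorem proj_eq_of_isProj {R : Set C} {x p : C} (h : X.IsProj R x p) : X.proj R x = p := by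
  have hex : ∃ p, X.IsProj R x p := ⟨p, h⟩
  rw [proj, dif_pos hex]
  by_contra hne
  have h₁ := hex.choose_spec.2 p h.1 (Ne.symm hne)
  have h₂ := h.2 _ hex.choose_spec.1 hne
  omega

theorem proj_spec (J : Set B) (c x : C) :
    X.proj (X.Res J c) x ∈ X.Res J c ∧ ∀ v ∈ cs.parabolic J,
      ℓ (X.δ x (X.proj (X.Res J c) x) * v) = ℓ (X.δ x (X.proj (X.Res J c) x)) + ℓ v := by
  obtain ⟨q, hq, hadd⟩ := X.exists_gate J c x
  rw [X.proj_eq_of_isProj (X.isProj_of_length_mul hq hadd)]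
  exact ⟨hq, hadd⟩

theorem proj_mem_Res (J : Set B) (c x : C) : X.proj (X.Res J c) x ∈ X.Res J c :=
  (X.proj_spec J c x).1

theorem length_delta_proj_mul (J : Set B) (c x : C) {v : W} (hv : v ∈ cs.parabolic J) :
    ℓ (X.δ x (X.proj (X.Res J c) x) * v) = ℓ (X.δ x (X.proj (X.Res J c) x)) + ℓ v :=
  (X.proj_spec J c x).2 v hv

theorem isProj_proj (J : Set B) (c x : C) : X.IsProj (X.Res J c) x (X.proj (X.Res J c) x) :=
  X.isProj_of_length_mul (X.proj_mem_Res J c x) fun _ => X.length_delta_proj_mul J c x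

theorem delta_proj_mem_parabolic {J : Set B} {c x y : C} (hy : y ∈ X.Res J c) :
    X.δ (X.proj (X.Res J c) x) y ∈ cs.parabolic J := by
  rw [← X.Res_eq_of_mem (X.proj_mem_Res J c x)] at hy
  exact hy

theorem delta_eq_delta_proj_mul {J : Set B} {c x y : C} (hy : y ∈ X.Res J c) :
    X.δ x y = X.δ x (X.proj (X.Res J c) x) * X.δ (X.proj (X.Res J c) x) y :=
  X.delta_eq_mul_of_length (X.length_delta_proj_mul J c x (X.delta_proj_mem_parabolic hy))

theorem dist_eq_dist_proj_add {J : Set B} {c x y : C} (hy : y ∈ X.Res J c) :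
    X.dist x y = X.dist x (X.proj (X.Res J c) x) + X.dist (X.proj (X.Res J c) x) y := by
  rw [dist, X.delta_eq_delta_proj_mul hy,
    X.length_delta_proj_mul J c x (X.delta_proj_mem_parabolic hy)]
  rfl

theorem eq_proj_of_dist_le {J : Set B} {c x y : C} (hy : y ∈ X.Res J c)
    (h : X.dist x y ≤ X.dist x (X.proj (X.Res J c) x)) : y = X.proj (X.Res J c) x := by
  by_contra hne
  have := (X.isProj_proj J c x).2 y hy hne
  omega

theorem projSet_subset (J : Set B) (c : C) (R' : Set C) :
    X.projSet (X.Res J c) R' ⊆ X.Res J c := by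
  rintro _ ⟨y, -, rfl⟩
  exact X.proj_mem_Res J c y

section TwoResidues

variable {J K : Set B} {c c' : C}

/-- With `x = proj_R y'`, the gate property in `R` and `R'` turns the triangle inequality for
`y'`, `proj_{R'} x` and `u = proj_R (proj_{R'} x)` into `dist x u = 0`. -/
theorem proj_proj_of_mem_projSet {x : C} (hx : x ∈ X.projSet (X.Res J c) (X.Res K c')) :
    X.proj (X.Res J c) (X.proj (X.Res K c') x) = x := by
  obtain ⟨y', hy', rfl⟩ := hx
  set x := X.proj (X.Res J c) y'
  set x' := X.proj (X.Res K c') x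
  set u := X.proj (X.Res J c) x'
  have h₁ : X.dist y' u = X.dist y' x + X.dist x u :=
    X.dist_eq_dist_proj_add (X.proj_mem_Res J c x')
  have h₂ : X.dist x y' = X.dist x x' + X.dist x' y' := X.dist_eq_dist_proj_add hy'
  have h₃ : X.dist x' x = X.dist x' u + X.dist u x :=
    X.dist_eq_dist_proj_add (X.proj_mem_Res J c y')
  have h₄ := X.dist_triangle y' x' u
  rw [X.dist_comm x y', X.dist_comm x x', X.dist_comm x' y'] at h₂
  rw [X.dist_comm u x] at h₃
  have : X.dist x u = 0 := by omega
  exact ((X.delta_eq_one_iff x u).mp (cs.length_eq_zero_iff.mp this)).symm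

theorem projSet_projSet_projSet :
    X.projSet (X.projSet (X.Res J c) (X.Res K c')) (X.projSet (X.Res K c') (X.Res J c)) =
      X.projSet (X.Res J c) (X.Res K c') := by
  have hproj : ∀ y' ∈ X.projSet (X.Res K c') (X.Res J c),
      X.proj (X.projSet (X.Res J c) (X.Res K c')) y' = X.proj (X.Res J c) y' := by
    intro y' hy'
    apply X.proj_eq_of_isProj
    refine ⟨⟨y', X.projSet_subset K c' _ hy', rfl⟩, fun z hz hne => ?_⟩
    exact (X.isProj_proj J c y').2 z (X.projSet_subset J c _ hz) hne
  apply subset_antisymm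
  · rintro _ ⟨y', hy', rfl⟩
    rw [hproj y' hy']
    exact ⟨y', X.projSet_subset K c' _ hy', rfl⟩
  · intro x hx
    have hx' : X.proj (X.Res K c') x ∈ X.projSet (X.Res K c') (X.Res J c) :=
      ⟨x, X.projSet_subset J c _ hx, rfl⟩
    exact ⟨_, hx', by rw [hproj _ hx', X.proj_proj_of_mem_projSet hx]⟩

theorem parallel_projSet :
    X.Parallel (X.projSet (X.Res K c') (X.Res J c)) (X.projSet (X.Res J c) (X.Res K c')) :=
  ⟨X.projSet_projSet_projSet, X.projSet_projSet_projSet⟩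

end TwoResidues

theorem exists_forall_dist_le {R R' : Set C} (hR : R.Nonempty) (hR' : R'.Nonempty) :
    ∃ p ∈ R, ∃ p' ∈ R', ∀ y ∈ R, ∀ y' ∈ R', X.dist p p' ≤ X.dist y y' := by
  have hne : (R ×ˢ R').Nonempty := hR.prod hR'
  obtain ⟨hp, hp'⟩ := Function.argminOn_mem (fun q : C × C => X.dist q.1 q.2) _ hne
  exact ⟨_, hp, _, hp', fun y hy y' hy' =>
    Function.argminOn_le (fun q : C × C => X.dist q.1 q.2) _ (Set.mk_mem_prod hy hy')⟩

section MinimalPair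

variable {J K : Set B} {p p' : C}
  (hmin : ∀ y ∈ X.Res J p, ∀ y' ∈ X.Res K p', X.dist p p' ≤ X.dist y y')
include hmin

theorem forall_dist_le_symm : ∀ y' ∈ X.Res K p', ∀ y ∈ X.Res J p, X.dist p' p ≤ X.dist y' y :=
  fun y' hy' y hy => by rw [X.dist_comm, X.dist_comm y']; exact hmin y hy y' hy'

theorem proj_eq_of_forall_dist_le : X.proj (X.Res J p) p' = p := by
  refine (X.eq_proj_of_dist_le (X.self_mem_Res J p) ?_).symm
  rw [X.dist_comm p' p, X.dist_comm p']
  exact hmin _ (X.proj_mem_Res J p p') p' (X.self_mem_Res K p')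

theorem isDoubleCosetReduced_delta_of_forall_dist_le :
    cs.IsDoubleCosetReduced J K (X.δ p p') := by
  have hp : X.proj (X.Res J p) p' = p := X.proj_eq_of_forall_dist_le hmin
  have hp' : X.proj (X.Res K p') p = p' := X.proj_eq_of_forall_dist_le (X.forall_dist_le_symm hmin)
  constructor
  · intro v hv
    have := X.length_delta_proj_mul J p p' (inv_mem hv)
    rw [hp] at this
    calc ℓ (v * X.δ p p') = ℓ (X.δ p' p * v⁻¹) := by
          rw [← length_inv, mul_inv_rev, X.delta_inv p p']
      _ = ℓ v + ℓ (X.δ p p') := by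
          rw [this, length_inv, add_comm]
          exact congrArg (ℓ v + ·) (X.dist_comm p' p)
  · intro u hu
    have := X.length_delta_proj_mul K p' p hu
    rwa [hp'] at this

theorem Res_interType_subset_projSet :
    X.Res (cs.interType J K (X.δ p p')) p ⊆ X.projSet (X.Res J p) (X.Res K p') := by
  intro x hx
  have hw := X.isDoubleCosetReduced_delta_of_forall_dist_le hmin
  have hxJ : x ∈ X.Res J p := parabolic_mono (interType_subset J K _) hx
  have hxp : X.δ x p ∈ cs.parabolic J := by rw [X.delta_inv]; exact inv_mem hxJ
  have hconj : (X.δ p p')⁻¹ * X.δ p x * X.δ p p' ∈ cs.parabolic K :=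
    parabolic_mono (interType_subset K J _) (hw.inv_mul_mul_mem_parabolic hx)
  obtain ⟨x', hx', hxx'⟩ := X.exists_mem_Res_delta_eq_mul x p' hconj
  have hδ : X.δ x x' = X.δ p p' := by
    rw [hxx', X.delta_eq_mul_of_length (hw.1 _ hxp), X.delta_inv p x]
    group
  refine ⟨x', hx', (X.eq_proj_of_dist_le hxJ ?_).symm⟩
  rw [X.dist_comm x', dist, hδ, X.dist_comm x']
  exact hmin _ (X.proj_mem_Res J p x') x' hx'

/-- Write `δ x' p' = u * a⁻¹` with `u` minimal in `u W_{interType K J (δ p' p)}`. Then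
`u * δ p' p` is the shortest element of `δ x' p W_J`, which by the gate property is
`δ x' (proj_R x')`; comparing the two expressions of `δ x' p` places `proj_R x'` in the residue. -/
theorem projSet_subset_Res_interType :
    X.projSet (X.Res J p) (X.Res K p') ⊆ X.Res (cs.interType J K (X.δ p p')) p := by
  rintro _ ⟨x', hx', rfl⟩
  have hw := X.isDoubleCosetReduced_delta_of_forall_dist_le hmin
  have hx'p' : X.δ x' p' ∈ cs.parabolic K := by rw [X.delta_inv]; exact inv_mem hx'
  obtain ⟨a, ha, ha_min⟩ := cs.exists_forall_length_mul_le (X.δ x' p')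
    (cs.parabolic (cs.interType K J (X.δ p p')⁻¹))
  have hu : X.δ x' p' * a ∈ cs.parabolic K :=
    mul_mem hx'p' (parabolic_mono (interType_subset _ _ _) ha)
  have hadd := hw.inv.length_mul_mul hu fun b hb => by
    rw [mul_assoc]; exact ha_min _ (mul_mem ha hb)
  have hc := hw.inv.inv_mul_mul_mem_parabolic (inv_mem ha)
  rw [inv_inv] at hc
  set x := X.proj (X.Res J p) x'
  have hxJ : X.δ p x ∈ cs.parabolic J := X.proj_mem_Res J p x'
  set e := X.δ p p' * a⁻¹ * (X.δ p p')⁻¹ * X.δ p x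
  have heJ : e ∈ cs.parabolic J := mul_mem (parabolic_mono (interType_subset _ _ _) hc) hxJ
  have hx'p : X.δ x' p = X.δ x' p' * (X.δ p p')⁻¹ := by
    rw [← X.delta_inv p p']
    exact X.delta_eq_mul_of_length (by rw [X.delta_inv p p']; exact hw.inv.1 _ hx'p')
  have hsplit : X.δ x' x = X.δ x' p' * a * (X.δ p p')⁻¹ * e := by
    have hgate : X.δ x' p = X.δ x' x * X.δ x p :=
      X.delta_eq_delta_proj_mul (X.self_mem_Res J p)
    have : X.δ x' x = X.δ x' p * X.δ p x := by rw [hgate, X.delta_inv x p]; group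
    rw [this, hx'p]
    simp only [e]
    group
  have h₁ := hadd e heJ
  have h₂ := hadd 1 (one_mem _)
  have h₃ : ℓ (X.δ x' x * e⁻¹) = ℓ (X.δ x' x) + ℓ e⁻¹ :=
    X.length_delta_proj_mul J p x' (inv_mem heJ)
  rw [hsplit, mul_inv_cancel_right, h₁] at h₃
  rw [mul_one, length_one, add_zero] at h₂
  rw [h₂] at h₃
  simp only [length_inv] at h₃
  have he : e = 1 := cs.length_eq_zero_iff.mp (by omega)
  rw [X.mem_Res_iff, eq_inv_of_mul_eq_one_right he]
  exact inv_mem hc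

theorem projSet_eq_Res_interType :
    X.projSet (X.Res J p) (X.Res K p') = X.Res (cs.interType J K (X.δ p p')) p :=
  subset_antisymm (X.projSet_subset_Res_interType hmin) (X.Res_interType_subset_projSet hmin)

end MinimalPair

end RAB.Building

theorem statement7_general {B W C : Type*} [Group W] {M : CoxeterMatrix B}
    (cs : CoxeterSystem M W) (X : RAB.Building cs C)
    (R R' : Set C) (hR : X.IsResidue R) (hR' : X.IsResidue R') :
    X.IsResidue (X.projSet R' R) ∧ X.IsResidue (X.projSet R R') ∧
      X.Parallel (X.projSet R' R) (X.projSet R R') := by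
  obtain ⟨J, c, rfl⟩ := hR
  obtain ⟨K, c', rfl⟩ := hR'
  obtain ⟨p, hp, p', hp', hmin⟩ := X.exists_forall_dist_le
    ⟨c, X.self_mem_Res J c⟩ ⟨c', X.self_mem_Res K c'⟩
  rw [← X.Res_eq_of_mem hp, ← X.Res_eq_of_mem hp'] at hmin ⊢
  exact ⟨⟨_, p', X.projSet_eq_Res_interType (X.forall_dist_le_symm hmin)⟩,
    ⟨_, p, X.projSet_eq_Res_interType hmin⟩, X.parallel_projSet⟩

/-- For any two residues `R`, `R'`, the sets `proj_{R'}(R)` and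
`proj_R(R')` are parallel residues. -/
theorem statement7 {B W C : Type*} [Fintype B] [Group W] {M : CoxeterMatrix B}
    (cs : CoxeterSystem M W) (X : RAB.Building cs C)
    (R R' : Set C) (hR : X.IsResidue R) (hR' : X.IsResidue R') :
    X.IsResidue (X.projSet R' R) ∧ X.IsResidue (X.projSet R R') ∧
      X.Parallel (X.projSet R' R) (X.projSet R R') :=
  statement7_general cs X R R' hR hR'
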